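/- Let M be a d-dimensional embedded submanifold of R^n, x ∈ M, U_x ⊆ R^n an open neighborhood of x, and π : U_x → M ∩ U_x a differentiable map with π ∘ π = π. Define V_x = {h ∈ T_xM : x + h ∈ U_x} and R_x(h) = π(x + h). Then R_x is a retraction at x, i.e., R_x(0) = x and the differential of R_x at 0 is the identity on T_xM. -/
import Mathlib


/-- The tangent space at `x` of a set `M ⊆ ℝⁿ`: the set of velocities at `0` of differentiable
curves lying in `M` and passing through `x` at time `0`. -/
def tangentSpaceAt {n : ℕ} (M : Set (EuclideanSpace ℝ (Fin n))) (x : EuclideanSpace ℝ (Fin n)) :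
    Set (EuclideanSpace ℝ (Fin n)) :=
  {v | ∃ γ : ℝ → EuclideanSpace ℝ (Fin n), ∃ ε > (0 : ℝ),
      (∀ t : ℝ, |t| < ε → γ t ∈ M) ∧ γ 0 = x ∧ HasDerivAt γ v 0}

/-- if `π : U → M ∩ U` is a differentiable idempotent map which restricts to the
identity on `M ∩ U`, then `R_x(h) = π(x + h)` is a retraction at `x`: `R_x(0) = x` and the
differential of `R_x` at `0` is the identity on the tangent space `T_x M`. -/
theorem stmt0 {n : ℕ} (M U : Set (EuclideanSpace ℝ (Fin n))) (x : EuclideanSpace ℝ (Fin n))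
    (hxM : x ∈ M) (hU : IsOpen U) (hxU : x ∈ U)
    (π : EuclideanSpace ℝ (Fin n) → EuclideanSpace ℝ (Fin n))
    (hπdiff : DifferentiableOn ℝ π U)
    (hπmaps : ∀ y ∈ U, π y ∈ M ∩ U)
    (hππ : ∀ y ∈ U, π (π y) = π y)
    (hπid : ∀ y ∈ M ∩ U, π y = y) :
    π (x + 0) = x ∧
      ∀ h ∈ tangentSpaceAt M x, deriv (fun t : ℝ => π (x + t • h)) 0 = h := by
  have hπx : DifferentiableAt ℝ π x :=
    (hπdiff x hxU).differentiableAt (hU.mem_nhds hxU)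
  have hfd : HasFDerivAt π (fderiv ℝ π x) x := hπx.hasFDerivAt
  constructor
  · rw [add_zero]; exact hπid x ⟨hxM, hxU⟩
  · intro h hh
    obtain ⟨γ, ε, hε, hγM, hγ0, hγd⟩ := hh
    -- π ∘ γ agrees with γ near 0
    have hcont : ContinuousAt γ 0 := hγd.continuousAt
    have hγU : ∀ᶠ t in nhds (0 : ℝ), γ t ∈ U := by
      have : U ∈ nhds (γ 0) := by rw [hγ0]; exact hU.mem_nhds hxU
      exact hcont.eventually_mem this
    have hsmall : ∀ᶠ t in nhds (0 : ℝ), |t| < ε := by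
      have : ContinuousAt (fun t : ℝ => |t|) 0 := continuous_abs.continuousAt
      have := this.eventually_lt continuousAt_const (by simpa using hε)
      simpa using this
    have heq : (fun t => π (γ t)) =ᶠ[nhds (0 : ℝ)] γ := by
      filter_upwards [hγU, hsmall] with t htU htε
      exact hπid (γ t) ⟨hγM t htε, htU⟩
    -- chain rule
    have hcomp : HasDerivAt (fun t => π (γ t)) (fderiv ℝ π x h) 0 := by
      have hfd' : HasFDerivAt π (fderiv ℝ π x) (γ 0) := by rw [hγ0]; exact hfd
      exact hfd'.comp_hasDerivAt 0 hγd
    have hγh : HasDerivAt γ (fderiv ℝ π x h) 0 := by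
      refine hcomp.congr_of_eventuallyEq heq.symm
    have hkey : fderiv ℝ π x h = h := hγh.unique hγd
    -- curve c t = x + t • h
    have hc : HasDerivAt (fun t : ℝ => x + t • h) h 0 := by
      simpa using ((hasDerivAt_id (0 : ℝ)).smul_const h).const_add x
    have hc0 : (fun t : ℝ => x + t • h) 0 = x := by simp
    have hfd2 : HasFDerivAt π (fderiv ℝ π x) ((fun t : ℝ => x + t • h) 0) := by
      rw [hc0]; exact hfd
    have : HasDerivAt (fun t : ℝ => π (x + t • h)) (fderiv ℝ π x h) 0 :=
      hfd2.comp_hasDerivAt 0 hc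
    rw [this.deriv, hkey]
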